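/- If for each y ∈ ℓ^1_{β,0} there exists a unique x ∈ ℓ^∞_{β,Z} solving x_{n+1} − A_n x_n = y_{n+1} and for each y ∈ ℓ^1_{-β,0} there exists a unique x ∈ ℓ^∞_{-β,Z} solving the same equation (for some closed subspace Z ⊂ X and some β > 0), then (A_n)_{n∈ℕ} admits a (μ,ν)-dichotomy, with exponent λ = β. -/

import Mathlib

/-!
Let `green n w` be the bounded solution of `x (k + 1) - A k (x k) = y (k + 1)` whose data `y` is
`w` at the single site `n + 1`. Up to time `n` it is a backward orbit issuing from `Z`; from time
`n + 1` on it is a forward orbit. Put `P n v = v + green n (A n v) n` and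
`B m n w = -green n (A n w) m`. Uniqueness of bounded solutions gives
`green (n + 1) (A (n + 1) w) = green n w - δ_{n+1} w` and `green 0 (A 0 z) = -δ_0 z` for
`z ∈ Z`. From these two identities one gets `A n ∘ P n = P (n + 1) ∘ A n`, and that `P n` kills
every point reached at time `n` by a backward orbit issuing from `Z`, such as `v - P n v`. All
the algebraic identities follow from this.

For the estimates, the graph of the solution operator, taken from weighted `ℓ¹` to weighted
`ℓ^∞`, is a closed subspace of `ℓ¹ × ℓ^∞`. By the open mapping theorem this graph is isomorphic
to `ℓ¹`, which gives `u k ‖green n w k‖ ≤ C u (n + 1) ν (n + 1) ‖w‖` for `u = μ^β`. Since `μ`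
increases, a `μ^β`-bounded solution is also `μ^(-β)`-bounded, so the second admissibility
hypothesis gives the same bound for `u = μ^(-β)`. The first bound controls the forward orbits
`𝒜 m n (P n v)`, and the second controls the backward values `B m n w`.
-/

open scoped ENNReal

section Admissibility

variable {X : Type*} [NormedAddCommGroup X]

def WeightedBounded (u : ℕ → ℝ) (x : ℕ → X) : Prop :=
  ∃ C, ∀ n, u n * ‖x n‖ ≤ C

namespace WeightedBounded

variable {u u' : ℕ → ℝ} {x x' : ℕ → X}

theorem add (hx : WeightedBounded u x) (hx' : WeightedBounded u x') :
    WeightedBounded u (x + x') := by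
  obtain ⟨C, hC⟩ := hx
  obtain ⟨C', hC'⟩ := hx'
  -- no sign condition on `u`: where `u n < 0` the weighted norm is nonpositive anyway
  refine ⟨max C 0 + max C' 0, fun n => ?_⟩
  rcases le_or_gt 0 (u n) with hn | hn
  · calc u n * ‖(x + x') n‖ ≤ u n * ‖x n‖ + u n * ‖x' n‖ := by
          rw [← mul_add]; exact mul_le_mul_of_nonneg_left (norm_add_le _ _) hn
      _ ≤ max C 0 + max C' 0 :=
          add_le_add ((hC n).trans (le_max_left _ _)) ((hC' n).trans (le_max_left _ _))
  · have : u n * ‖(x + x') n‖ ≤ 0 := mul_nonpos_of_nonpos_of_nonneg hn.le (norm_nonneg _)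
    linarith [le_max_right C 0, le_max_right C' 0]

theorem single (u : ℕ → ℝ) (i : ℕ) (w : X) : WeightedBounded u (Pi.single i w) := by
  refine ⟨max (u i * ‖w‖) 0, fun n => ?_⟩
  rcases eq_or_ne n i with rfl | hn
  · simp
  · simp [Pi.single_eq_of_ne hn]

theorem mono {c : ℝ} (hx : WeightedBounded u x) (hc : 0 ≤ c) (hu : ∀ n, u' n ≤ c * u n) :
    WeightedBounded u' x := by
  obtain ⟨C, hC⟩ := hx
  refine ⟨c * C, fun n => ?_⟩
  calc u' n * ‖x n‖ ≤ c * u n * ‖x n‖ := mul_le_mul_of_nonneg_right (hu n) (norm_nonneg _)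
    _ ≤ c * C := by rw [mul_assoc]; exact mul_le_mul_of_nonneg_left (hC n) hc

variable [NormedSpace ℝ X]

theorem smul (c : ℝ) (hx : WeightedBounded u x) : WeightedBounded u (c • x) := by
  obtain ⟨C, hC⟩ := hx
  refine ⟨|c| * C, fun n => ?_⟩
  rw [Pi.smul_apply, norm_smul, Real.norm_eq_abs, mul_left_comm]
  exact mul_le_mul_of_nonneg_left (hC n) (abs_nonneg c)

theorem sub (hx : WeightedBounded u x) (hx' : WeightedBounded u x') :
    WeightedBounded u (x - x') := by
  simpa [sub_eq_add_neg] using hx.add (hx'.smul (-1))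

theorem memℓp_smul (hu : ∀ n, 0 ≤ u n) (hx : WeightedBounded u x) :
    Memℓp (fun n => u n • x n) ∞ := by
  obtain ⟨C, hC⟩ := hx
  refine memℓp_infty ⟨C, ?_⟩
  rintro - ⟨n, rfl⟩
  simpa [norm_smul, abs_of_nonneg (hu n)] using hC n

theorem of_lp {u : ℕ → ℝ} (hu : ∀ n, 0 < u n) (g : lp (fun _ : ℕ => X) ∞) :
    WeightedBounded u (fun n => (u n)⁻¹ • g n) := by
  refine ⟨‖g‖, fun n => ?_⟩
  rw [norm_smul, norm_inv, Real.norm_eq_abs, abs_of_pos (hu n), mul_inv_cancel_left₀ (hu n).ne']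
  exact lp.norm_apply_le_norm ENNReal.top_ne_zero g n

end WeightedBounded

theorem hasSum_weighted_single (u ν : ℕ → ℝ) (i : ℕ) (w : X) :
    HasSum (fun n => u n * ν n * ‖(Pi.single i w : ℕ → X) n‖) (u i * ν i * ‖w‖) := by
  simpa using hasSum_single (f := fun n => u n * ν n * ‖(Pi.single i w : ℕ → X) n‖) i
    fun n hn => by simp [Pi.single_eq_of_ne hn]

variable [NormedSpace ℝ X]

def IsBoundedSolution (u : ℕ → ℝ) (A : ℕ → X →L[ℝ] X) (Z : Submodule ℝ X) (y x : ℕ → X) :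
    Prop :=
  x 0 ∈ Z ∧ WeightedBounded u x ∧ ∀ n, x (n + 1) - A n (x n) = y (n + 1)

/-- For `u = μ ^ γ`: the pair `(ℓ¹_{γ,0}, ℓ^∞_{γ,Z})` is admissible. -/
def Admissible (u ν : ℕ → ℝ) (A : ℕ → X →L[ℝ] X) (Z : Submodule ℝ X) : Prop :=
  ∀ y : ℕ → X, y 0 = 0 → Summable (fun n => u n * ν n * ‖y n‖) →
    ∃! x, IsBoundedSolution u A Z y x

namespace IsBoundedSolution

variable {u u' : ℕ → ℝ} {A : ℕ → X →L[ℝ] X} {Z : Submodule ℝ X} {y y' x x' : ℕ → X}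

theorem zero : IsBoundedSolution u A Z 0 0 :=
  ⟨Z.zero_mem, ⟨0, fun n => by simp⟩, fun n => by simp⟩

theorem add (hx : IsBoundedSolution u A Z y x) (hx' : IsBoundedSolution u A Z y' x') :
    IsBoundedSolution u A Z (y + y') (x + x') :=
  ⟨Z.add_mem hx.1 hx'.1, hx.2.1.add hx'.2.1, fun n => by
    simp only [Pi.add_apply, map_add, ← hx.2.2 n, ← hx'.2.2 n]; abel⟩

theorem smul (c : ℝ) (hx : IsBoundedSolution u A Z y x) :
    IsBoundedSolution u A Z (c • y) (c • x) :=
  ⟨Z.smul_mem c hx.1, hx.2.1.smul c, fun n => by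
    simp only [Pi.smul_apply, map_smul, ← hx.2.2 n, smul_sub]⟩

theorem mono {c : ℝ} (hx : IsBoundedSolution u A Z y x) (hc : 0 ≤ c)
    (hu : ∀ n, u' n ≤ c * u n) : IsBoundedSolution u' A Z y x :=
  ⟨hx.1, hx.2.1.mono hc hu, hx.2.2⟩

theorem succ_eq (hx : IsBoundedSolution u A Z y x) (n : ℕ) :
    x (n + 1) = A n (x n) + y (n + 1) :=
  eq_add_of_sub_eq' (hx.2.2 n)

theorem congr_succ (hx : IsBoundedSolution u A Z y x) (hy : ∀ n, y (n + 1) = y' (n + 1)) :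
    IsBoundedSolution u A Z y' x :=
  ⟨hx.1, hx.2.1, fun n => (hx.2.2 n).trans (hy n)⟩

end IsBoundedSolution

section Bound

variable {u ν : ℕ → ℝ} {A : ℕ → X →L[ℝ] X} {Z : Submodule ℝ X}

variable (u ν A Z) in
/-- Pairs `(f, g)` such that `x = g / u` is a bounded solution for the data `y = f / (u ν)`. -/
def solutionGraph : Submodule ℝ (lp (fun _ : ℕ => X) 1 × lp (fun _ : ℕ => X) ∞) where
  carrier := {p | IsBoundedSolution u A Z (fun n => (u n * ν n)⁻¹ • p.1 n)
    (fun n => (u n)⁻¹ • p.2 n)}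
  add_mem' {p q} hp hq := by
    simp only [Set.mem_ofPred_eq] at hp hq ⊢
    convert hp.add hq using 1 <;> ext n <;> simp [smul_add]
  zero_mem' := by
    simp only [Set.mem_ofPred_eq]
    convert IsBoundedSolution.zero (u := u) (A := A) (Z := Z) using 1 <;> ext n <;> simp
  smul_mem' c p hp := by
    simp only [Set.mem_ofPred_eq] at hp ⊢
    convert hp.smul c using 1 <;> ext n <;> simp [smul_comm c]

theorem mem_solutionGraph {p : lp (fun _ : ℕ => X) 1 × lp (fun _ : ℕ => X) ∞} :
    p ∈ solutionGraph u ν A Z ↔ IsBoundedSolution u A Z (fun n => (u n * ν n)⁻¹ • p.1 n)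
      (fun n => (u n)⁻¹ • p.2 n) :=
  Iff.rfl

theorem isClosed_solutionGraph (hu : ∀ n, 0 < u n) (hZ : IsClosed (Z : Set X)) :
    IsClosed (solutionGraph u ν A Z : Set (lp (fun _ : ℕ => X) 1 × lp (fun _ : ℕ => X) ∞)) := by
  have hev : ∀ (q : ℝ≥0∞) [Fact (1 ≤ q)] (n : ℕ), Continuous fun g : lp (fun _ : ℕ => X) q => g n :=
    fun q _ n => (lp.lipschitzWith_one_eval q n).continuous
  have hgraph : (solutionGraph u ν A Z : Set (lp (fun _ : ℕ => X) 1 × lp (fun _ : ℕ => X) ∞)) =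
      (fun p => (u 0)⁻¹ • p.2 0) ⁻¹' Z ∩ ⋂ n, {p | (u (n + 1))⁻¹ • p.2 (n + 1)
        - A n ((u n)⁻¹ • p.2 n) = (u (n + 1) * ν (n + 1))⁻¹ • p.1 (n + 1)} := by
    ext p
    simp [mem_solutionGraph, IsBoundedSolution, WeightedBounded.of_lp hu]
  rw [hgraph]
  exact (hZ.preimage (((hev _ 0).comp continuous_snd).const_smul _)).inter
    (isClosed_iInter fun n => isClosed_eq
      ((((hev _ _).comp continuous_snd).const_smul _).sub
        ((A n).continuous.comp (((hev _ n).comp continuous_snd).const_smul _)))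
      (((hev _ _).comp continuous_fst).const_smul _))

theorem Admissible.eq_zero_of_mem_solutionGraph (h : Admissible u ν A Z) (hu : ∀ n, 0 < u n)
    {p : lp (fun _ : ℕ => X) 1 × lp (fun _ : ℕ => X) ∞} (hp : p ∈ solutionGraph u ν A Z)
    (hp₁ : p.1 = 0) : p = 0 := by
  have hx : (fun n => (u n)⁻¹ • p.2 n) = 0 :=
    (h 0 rfl (by simp)).unique
      (by rw [mem_solutionGraph] at hp; convert hp using 2; simp [hp₁])
      IsBoundedSolution.zero
  refine Prod.ext hp₁ (lp.ext (funext fun n => ?_))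
  simpa [(hu n).ne'] using congr_fun hx n

theorem Admissible.exists_mem_solutionGraph (h : Admissible u ν A Z) (hu : ∀ n, 0 < u n)
    (hν : ∀ n, 0 < ν n) (f : lp (fun _ : ℕ => X) 1) :
    ∃ g, (f, g) ∈ solutionGraph u ν A Z := by
  set y : ℕ → X := fun n => if n = 0 then 0 else (u n * ν n)⁻¹ • f n
  have hf : Summable fun n => ‖f n‖ := by simpa using (lp.memℓp f).summable (by norm_num)
  have hy : Summable fun n => u n * ν n * ‖y n‖ := by
    refine hf.of_nonneg_of_le (fun n => by have := hu n; have := hν n; positivity) fun n => ?_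
    rcases eq_or_ne n 0 with rfl | hn
    · simp [y]
    · have huν := mul_pos (hu n) (hν n)
      simp only [y, if_neg hn]
      rw [norm_smul, norm_inv, Real.norm_eq_abs, abs_of_pos huν,
        mul_inv_cancel_left₀ huν.ne']
  obtain ⟨x, hx, -⟩ := h y (if_pos rfl) hy
  refine ⟨⟨fun n => u n • x n, hx.2.1.memℓp_smul fun n => (hu n).le⟩, ?_⟩
  rw [mem_solutionGraph]
  convert hx.congr_succ (y' := fun n => (u n * ν n)⁻¹ • f n) (fun n => if_neg n.succ_ne_zero)
    using 1
  ext n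
  simp [(hu n).ne']

variable [CompleteSpace X]

theorem Admissible.exists_norm_le_of_mem_solutionGraph (h : Admissible u ν A Z) (hu : ∀ n, 0 < u n)
    (hν : ∀ n, 0 < ν n) (hZ : IsClosed (Z : Set X)) :
    ∃ C, 0 ≤ C ∧ ∀ p ∈ solutionGraph u ν A Z, ‖p.2‖ ≤ C * ‖p.1‖ := by
  have : CompleteSpace (solutionGraph u ν A Z) :=
    (isClosed_solutionGraph (ν := ν) (A := A) hu hZ).completeSpace_coe
  set π := (ContinuousLinearMap.fst ℝ _ _).comp (solutionGraph u ν A Z).subtypeL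
  have hinj : π.ker = ⊥ := LinearMap.ker_eq_bot'.2 fun p hp =>
    Subtype.ext (h.eq_zero_of_mem_solutionGraph hu p.2 hp)
  have hsurj : π.range = ⊤ := LinearMap.range_eq_top.2 fun f =>
    let ⟨g, hg⟩ := h.exists_mem_solutionGraph hu hν f; ⟨⟨(f, g), hg⟩, rfl⟩
  set e := ContinuousLinearEquiv.ofBijective π hinj hsurj
  refine ⟨‖e.symm.toContinuousLinearMap‖, norm_nonneg _, fun p hp => ?_⟩
  calc ‖p.2‖ ≤ ‖(⟨p, hp⟩ : solutionGraph u ν A Z)‖ := norm_snd_le p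
    _ = ‖e.symm p.1‖ := by
      rw [show p.1 = π ⟨p, hp⟩ from rfl, ContinuousLinearEquiv.ofBijective_symm_apply_apply]
    _ ≤ ‖e.symm.toContinuousLinearMap‖ * ‖p.1‖ := e.symm.toContinuousLinearMap.le_opNorm _

theorem Admissible.exists_bound (h : Admissible u ν A Z) (hu : ∀ n, 0 < u n)
    (hν : ∀ n, 0 < ν n) (hZ : IsClosed (Z : Set X)) :
    ∃ C, 0 ≤ C ∧ ∀ {y x : ℕ → X}, Summable (fun n => u n * ν n * ‖y n‖) →
      IsBoundedSolution u A Z y x → ∀ k, u k * ‖x k‖ ≤ C * ∑' n, u n * ν n * ‖y n‖ := by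
  obtain ⟨C, hC0, hC⟩ := h.exists_norm_le_of_mem_solutionGraph hu hν hZ
  refine ⟨C, hC0, fun {y x} hy hx k => ?_⟩
  have huν n : 0 < u n * ν n := mul_pos (hu n) (hν n)
  have hnorm n : ‖(u n * ν n) • y n‖ = u n * ν n * ‖y n‖ := by
    rw [norm_smul, Real.norm_of_nonneg (huν n).le]
  let f : lp (fun _ : ℕ => X) 1 :=
    ⟨fun n => (u n * ν n) • y n, memℓp_gen (by simpa [hnorm] using hy)⟩
  let g : lp (fun _ : ℕ => X) ∞ := ⟨fun n => u n • x n, hx.2.1.memℓp_smul fun n => (hu n).le⟩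
  have hfg : (f, g) ∈ solutionGraph u ν A Z := by
    rw [mem_solutionGraph]
    convert hx using 1 <;> funext n
    · exact inv_smul_smul₀ (huν n).ne' (y n)
    · exact inv_smul_smul₀ (hu n).ne' (x n)
  have hf : ‖f‖ = ∑' n, u n * ν n * ‖y n‖ := by
    rw [lp.norm_eq_tsum_rpow (by simp) f]
    simp [f, hnorm]
  calc u k * ‖x k‖ = ‖g k‖ := by simp [g, norm_smul, abs_of_pos (hu k)]
    _ ≤ ‖g‖ := lp.norm_apply_le_norm ENNReal.top_ne_zero g k
    _ ≤ C * ‖f‖ := hC _ hfg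
    _ = C * ∑' n, u n * ν n * ‖y n‖ := by rw [hf]

end Bound

theorem evolution_apply_eq {A : ℕ → X →L[ℝ] X} {𝒜 : ℕ → ℕ → X →L[ℝ] X}
    (h𝒜id : ∀ n, 𝒜 n n = 1) (h𝒜succ : ∀ m n, n ≤ m → 𝒜 (m + 1) n = (A m).comp (𝒜 m n))
    {x : ℕ → X} {n : ℕ} (hx : ∀ k, n ≤ k → x (k + 1) = A k (x k)) {m : ℕ} (hnm : n ≤ m) :
    𝒜 m n (x n) = x m := by
  induction m, hnm using Nat.le_induction with
  | base => simp [h𝒜id]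
  | succ k hk ih => rw [h𝒜succ k n hk, ContinuousLinearMap.comp_apply, ih, hx k hk]

theorem le_mul_div_of_mul_le_mul {a b c d C ν : ℝ} (hb : 0 < b) (h : b * a ≤ C * (c * ν * d)) :
    a ≤ C * ν * (c / b) * d := by
  rw [show C * ν * (c / b) * d = C * (c * ν * d) / b by ring, le_div_iff₀ hb]
  linarith

section Green

variable {u ν : ℕ → ℝ} {A : ℕ → X →L[ℝ] X} {Z : Submodule ℝ X} (h : Admissible u ν A Z)

noncomputable def Admissible.green (n : ℕ) (w : X) : ℕ → X :=
  (h (Pi.single (n + 1) w) (Pi.single_eq_of_ne (Nat.succ_ne_zero n).symm w)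
    (hasSum_weighted_single u ν _ w).summable).exists.choose

namespace Admissible

theorem isBoundedSolution_green (n : ℕ) (w : X) :
    IsBoundedSolution u A Z (Pi.single (n + 1) w) (h.green n w) :=
  (h (Pi.single (n + 1) w) (Pi.single_eq_of_ne (Nat.succ_ne_zero n).symm w)
    (hasSum_weighted_single u ν _ w).summable).exists.choose_spec

theorem green_eq {n : ℕ} {w : X} {x : ℕ → X}
    (hx : IsBoundedSolution u A Z (Pi.single (n + 1) w) x) : h.green n w = x :=
  (h (Pi.single (n + 1) w) (Pi.single_eq_of_ne (Nat.succ_ne_zero n).symm w)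
    (hasSum_weighted_single u ν _ w).summable).unique (h.isBoundedSolution_green n w) hx

theorem green_add (n : ℕ) (w w' : X) : h.green n (w + w') = h.green n w + h.green n w' :=
  h.green_eq <| by
    rw [Pi.single_add]; exact (h.isBoundedSolution_green n w).add (h.isBoundedSolution_green n w')

theorem green_smul (n : ℕ) (c : ℝ) (w : X) : h.green n (c • w) = c • h.green n w :=
  h.green_eq <| by rw [Pi.single_smul]; exact (h.isBoundedSolution_green n w).smul c

theorem green_succ (n k : ℕ) (w : X) :
    h.green n w (k + 1) = A k (h.green n w k) + (Pi.single (n + 1) w : ℕ → X) (k + 1) :=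
  (h.isBoundedSolution_green n w).succ_eq k

theorem green_succ_of_ne {n k : ℕ} (hk : k ≠ n) (w : X) :
    h.green n w (k + 1) = A k (h.green n w k) := by
  rw [green_succ, Pi.single_eq_of_ne (by omega), add_zero]

theorem green_succ_self (n : ℕ) (w : X) : h.green n w (n + 1) = A n (h.green n w n) + w := by
  rw [green_succ, Pi.single_eq_same]

theorem green_shift (n : ℕ) (w : X) :
    h.green (n + 1) (A (n + 1) w) = h.green n w - Pi.single (n + 1) w := by
  refine h.green_eq ⟨?_, (h.isBoundedSolution_green n w).2.1.sub (.single u _ w), fun k => ?_⟩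
  · simpa using (h.isBoundedSolution_green n w).1
  · simp only [Pi.sub_apply, map_sub, green_succ]
    rcases eq_or_ne k (n + 1) with rfl | hk
    · simp
    · simp [Pi.single_eq_of_ne hk, Pi.single_eq_of_ne (show k + 1 ≠ n + 1 + 1 by omega)]

theorem green_map_of_mem {z : X} (hz : z ∈ Z) : h.green 0 (A 0 z) = -Pi.single 0 z := by
  refine h.green_eq ⟨by simpa using Z.neg_mem hz, ?_, fun k => ?_⟩
  · simpa [Pi.single_neg] using WeightedBounded.single u 0 (-z)
  · rcases eq_or_ne k 0 with rfl | hk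
    · simp
    · simp [Pi.single_eq_of_ne hk, Pi.single_eq_of_ne (show k + 1 ≠ 0 + 1 by omega)]

noncomputable def greenₗ (n k : ℕ) : X →ₗ[ℝ] X where
  toFun w := h.green n w k
  map_add' w w' := by rw [h.green_add]; rfl
  map_smul' c w := by rw [h.green_smul]; rfl

noncomputable def proj (n : ℕ) : X →ₗ[ℝ] X :=
  LinearMap.id + h.greenₗ n n ∘ₗ (A n : X →ₗ[ℝ] X)

noncomputable def backward (m n : ℕ) : X →ₗ[ℝ] X :=
  -(h.greenₗ n m ∘ₗ (A n : X →ₗ[ℝ] X))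

theorem proj_apply (n : ℕ) (v : X) : h.proj n v = v + h.green n (A n v) n := rfl

theorem backward_apply (m n : ℕ) (w : X) : h.backward m n w = -h.green n (A n w) m := rfl

theorem proj_succ (n : ℕ) (v : X) : h.proj (n + 1) v = h.green n v (n + 1) := by
  simp [proj_apply, green_shift]

theorem backward_self (n : ℕ) (w : X) : h.backward n n w = w - h.proj n w := by
  simp [proj_apply, backward_apply]

theorem backward_succ_of_le {m n : ℕ} (hmn : m ≤ n) (w : X) :
    h.backward m (n + 1) w = -h.green n w m := by
  simp [backward_apply, green_shift, Pi.single_eq_of_ne (show m ≠ n + 1 by omega)]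

theorem map_proj (n : ℕ) (v : X) : A n (h.proj n v) = h.proj (n + 1) (A n v) := by
  rw [proj_succ, green_succ_self, proj_apply, map_add, add_comm]

theorem proj_green_eq_zero {m n : ℕ} (hmn : m ≤ n) (w : X) : h.proj m (h.green n w m) = 0 := by
  induction m with
  | zero => simp [proj_apply, h.green_map_of_mem (h.isBoundedSolution_green n w).1]
  | succ m ih => rw [h.green_succ_of_ne (by omega), ← map_proj, ih (by omega), map_zero]

theorem proj_proj (n : ℕ) (v : X) : h.proj n (h.proj n v) = h.proj n v := by
  have hker : h.proj n (v - h.proj n v) = 0 := by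
    rw [h.proj_apply n v, sub_add_cancel_left, map_neg, h.proj_green_eq_zero le_rfl, neg_zero]
  rwa [map_sub, sub_eq_zero, eq_comm] at hker

theorem map_backward {m n : ℕ} (hmn : m < n) (w : X) :
    A m (h.backward m n w) = h.backward (m + 1) n w := by
  rw [backward_apply, backward_apply, map_neg, h.green_succ_of_ne hmn.ne]

theorem proj_backward {m n : ℕ} (hmn : m ≤ n) (w : X) : h.proj m (h.backward m n w) = 0 := by
  rw [backward_apply, map_neg, h.proj_green_eq_zero hmn, neg_zero]

theorem backward_map_of_proj_eq_zero {n : ℕ} {v : X} (hv : h.proj n v = 0) :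
    h.backward n (n + 1) (A n v) = v := by
  rw [proj_apply] at hv
  rw [h.backward_succ_of_le le_rfl]
  exact (eq_neg_of_add_eq_zero_left hv).symm

section Estimates

variable {𝒜 : ℕ → ℕ → X →L[ℝ] X}

theorem evolution_proj (h𝒜id : ∀ n, 𝒜 n n = 1)
    (h𝒜succ : ∀ m n, n ≤ m → 𝒜 (m + 1) n = (A m).comp (𝒜 m n)) {m n : ℕ} (hnm : n ≤ m)
    (v : X) :
    𝒜 m n (h.proj n v) = h.green n (A n v) m + (Pi.single n v : ℕ → X) m := by
  set x : ℕ → X := h.green n (A n v) + Pi.single n v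
  have hx : ∀ k, n ≤ k → x (k + 1) = A k (x k) := by
    intro k hk
    simp only [x, Pi.add_apply, map_add, green_succ, Pi.single_eq_of_ne (show k + 1 ≠ n by omega)]
    rcases eq_or_ne k n with rfl | hkn
    · simp
    · simp [Pi.single_eq_of_ne hkn, Pi.single_eq_of_ne (show k + 1 ≠ n + 1 by omega)]
  simpa [x, proj_apply, add_comm] using evolution_apply_eq h𝒜id h𝒜succ hx hnm

theorem evolution_proj_succ (h𝒜id : ∀ n, 𝒜 n n = 1)
    (h𝒜succ : ∀ m n, n ≤ m → 𝒜 (m + 1) n = (A m).comp (𝒜 m n)) {m n : ℕ} (hnm : n + 1 ≤ m)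
    (v : X) :
    𝒜 m (n + 1) (h.proj (n + 1) v) = h.green n v m := by
  rw [h.evolution_proj h𝒜id h𝒜succ hnm, green_shift]
  simp

theorem exists_norm_evolution_proj_le (h𝒜id : ∀ n, 𝒜 n n = 1)
    (h𝒜succ : ∀ m n, n ≤ m → 𝒜 (m + 1) n = (A m).comp (𝒜 m n))
    (hu : ∀ n, 0 < u n) (hν : ∀ n, 1 ≤ ν n) {C : ℝ}
    (hC0 : 0 ≤ C) (hC : ∀ n w k, u k * ‖h.green n w k‖ ≤ C * (u (n + 1) * ν (n + 1) * ‖w‖)) :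
    ∃ D, 0 ≤ D ∧ ∀ m n, n ≤ m → ∀ v, ‖𝒜 m n (h.proj n v)‖ ≤ D * ν n * (u n / u m) * ‖v‖ := by
  set K := C * u 1 * ν 1 * ‖A 0‖ / u 0 + 1 with hKdef
  have hK : 0 ≤ K := by have := hu 0; have := hu 1; have := hν 1; positivity
  refine ⟨max C K, le_max_of_le_left hC0, fun m n hnm v => ?_⟩
  have hr : 0 ≤ u n / u m := (div_pos (hu n) (hu m)).le
  cases n with
  | zero =>
    -- data live at sites `≥ 1`, so the orbit of `proj 0 v` is controlled through `A 0 v`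
    have hsingle : u m * ‖(Pi.single 0 v : ℕ → X) m‖ ≤ u 0 * ‖v‖ := by
      rcases eq_or_ne m 0 with rfl | hm
      · simp
      · simpa [Pi.single_eq_of_ne hm] using mul_nonneg (hu 0).le (norm_nonneg v)
    have hbound : u m * ‖h.green 0 (A 0 v) m + (Pi.single 0 v : ℕ → X) m‖ ≤ K * (u 0 * 1 * ‖v‖) :=
      calc u m * ‖h.green 0 (A 0 v) m + (Pi.single 0 v : ℕ → X) m‖
          ≤ u m * ‖h.green 0 (A 0 v) m‖ + u m * ‖(Pi.single 0 v : ℕ → X) m‖ := by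
            rw [← mul_add]; exact mul_le_mul_of_nonneg_left (norm_add_le _ _) (hu m).le
        _ ≤ C * (u 1 * ν 1 * (‖A 0‖ * ‖v‖)) + u 0 * ‖v‖ :=
            add_le_add ((hC 0 (A 0 v) m).trans (mul_le_mul_of_nonneg_left
              (mul_le_mul_of_nonneg_left ((A 0).le_opNorm v)
                (mul_pos (hu 1) (by linarith [hν 1])).le) hC0)) hsingle
        _ = K * (u 0 * 1 * ‖v‖) := by rw [hKdef]; field_simp [(hu 0).ne']
    rw [h.evolution_proj h𝒜id h𝒜succ hnm]
    refine (le_mul_div_of_mul_le_mul (hu m) hbound).trans ?_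
    gcongr
    exacts [le_max_right C K, hν 0]
  | succ n =>
    rw [h.evolution_proj_succ h𝒜id h𝒜succ hnm]
    refine (le_mul_div_of_mul_le_mul (hu m) (hC n v m)).trans ?_
    gcongr
    · linarith [hν (n + 1)]
    · exact le_max_left C K

end Estimates

theorem norm_backward_le {u' : ℕ → ℝ} (hu' : ∀ n, 0 < u' n) (hν : ∀ n, 1 ≤ ν n) {D C : ℝ}
    (hD0 : 0 ≤ D) (hC0 : 0 ≤ C) (hP : ∀ n v, ‖h.proj n v‖ ≤ D * ν n * ‖v‖)
    (hC : ∀ n w k, u' k * ‖h.green n w k‖ ≤ C * (u' (n + 1) * ν (n + 1) * ‖w‖))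
    {m n : ℕ} (hmn : m ≤ n) (w : X) :
    ‖h.backward m n w‖ ≤ (1 + D + C) * ν n * (u' n / u' m) * ‖w‖ := by
  rcases hmn.eq_or_lt with rfl | hlt
  · rw [backward_self, div_self (hu' m).ne', mul_one]
    calc ‖w - h.proj m w‖ ≤ ‖w‖ + D * ν m * ‖w‖ := (norm_sub_le _ _).trans (by linarith [hP m w])
      _ ≤ (1 + D + C) * ν m * ‖w‖ := by
          nlinarith [hν m, norm_nonneg w, mul_nonneg hC0 (norm_nonneg w)]
  · cases n with
    | zero => omega
    | succ n =>
      rw [h.backward_succ_of_le (by omega), norm_neg]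
      refine (le_mul_div_of_mul_le_mul (hu' m) (hC n w m)).trans ?_
      have := (div_pos (hu' (n + 1)) (hu' m)).le
      gcongr
      · linarith [hν (n + 1)]
      · linarith

end Admissible

end Green

theorem Admissible.exists_dichotomy [CompleteSpace X] {u u' ν : ℕ → ℝ} {A : ℕ → X →L[ℝ] X}
    {𝒜 : ℕ → ℕ → X →L[ℝ] X} {Z : Submodule ℝ X}
    (h𝒜id : ∀ n, 𝒜 n n = 1) (h𝒜succ : ∀ m n, n ≤ m → 𝒜 (m + 1) n = (A m).comp (𝒜 m n))
    (hu : ∀ n, 0 < u n) (hu' : ∀ n, 0 < u' n) (hν : ∀ n, 1 ≤ ν n) (hZ : IsClosed (Z : Set X))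
    (h : Admissible u ν A Z) (h' : Admissible u' ν A Z) {c : ℝ} (hc : 0 ≤ c)
    (hcomp : ∀ n, u' n ≤ c * u n) :
    ∃ (P : ℕ → X →L[ℝ] X) (B : ℕ → ℕ → X →L[ℝ] X) (D : ℝ), 0 < D
      ∧ (∀ n, (P n).comp (P n) = P n)
      ∧ (∀ n, (A n).comp (P n) = (P (n + 1)).comp (A n))
      ∧ (∀ n, B n n = 1 - P n)
      ∧ (∀ m n, m < n → (A m).comp (B m n) = B (m + 1) n)
      ∧ (∀ m n, m ≤ n → (P m).comp (B m n) = 0)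
      ∧ (∀ n v, P n v = 0 → B n (n + 1) (A n v) = v)
      ∧ (∀ m n, n ≤ m → ‖(𝒜 m n).comp (P n)‖ ≤ D * ν n * (u n / u m))
      ∧ (∀ m n, m ≤ n → ‖B m n‖ ≤ D * ν n * (u' n / u' m)) := by
  have hν₀ n : 0 < ν n := one_pos.trans_le (hν n)
  obtain ⟨C₁, hC₁0, hC₁⟩ := h.exists_bound hu hν₀ hZ
  obtain ⟨C₂, hC₂0, hC₂⟩ := h'.exists_bound hu' hν₀ hZ
  have hG₁ n w k : u k * ‖h.green n w k‖ ≤ C₁ * (u (n + 1) * ν (n + 1) * ‖w‖) := by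
    simpa [(hasSum_weighted_single u ν (n + 1) w).tsum_eq] using
      hC₁ (hasSum_weighted_single u ν (n + 1) w).summable (h.isBoundedSolution_green n w) k
  have hG₂ n w k : u' k * ‖h.green n w k‖ ≤ C₂ * (u' (n + 1) * ν (n + 1) * ‖w‖) := by
    simpa [(hasSum_weighted_single u' ν (n + 1) w).tsum_eq] using
      hC₂ (hasSum_weighted_single u' ν (n + 1) w).summable
        ((h.isBoundedSolution_green n w).mono hc hcomp) k
  obtain ⟨D, hD0, hD⟩ := h.exists_norm_evolution_proj_le h𝒜id h𝒜succ hu hν hC₁0 hG₁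
  have hP n v : ‖h.proj n v‖ ≤ D * ν n * ‖v‖ := by
    simpa [h𝒜id, div_self (hu n).ne'] using hD n n le_rfl v
  let Γ n k : X →L[ℝ] X := (h.greenₗ n k).mkContinuousOfExistsBound
    ⟨_, fun w => le_mul_div_of_mul_le_mul (hu k) (hG₁ n w k)⟩
  refine ⟨fun n => 1 + (Γ n n).comp (A n), fun m n => -(Γ n m).comp (A n), 1 + D + C₂,
    by positivity, fun n => ContinuousLinearMap.ext (h.proj_proj n),
    fun n => ContinuousLinearMap.ext (h.map_proj n),
    fun n => ContinuousLinearMap.ext (h.backward_self n),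
    fun m n hmn => ContinuousLinearMap.ext (h.map_backward hmn),
    fun m n hmn => ContinuousLinearMap.ext (h.proj_backward hmn),
    fun n v hv => h.backward_map_of_proj_eq_zero hv, fun m n hnm => ?_, fun m n hmn => ?_⟩
  · have hr : 0 ≤ u n / u m := (div_pos (hu n) (hu m)).le
    refine ContinuousLinearMap.opNorm_le_bound _ (by have := hν₀ n; positivity) fun v =>
      (hD m n hnm v).trans ?_
    gcongr
    · linarith [hν n]
    · linarith
  · have hr : 0 ≤ u' n / u' m := (div_pos (hu' n) (hu' m)).le
    exact ContinuousLinearMap.opNorm_le_bound _ (by have := hν₀ n; positivity)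
      (h.norm_backward_le hu' hν hD0 hC₂0 hP hG₂ hmn)

end Admissibility

theorem stmt12_general {X : Type*} [NormedAddCommGroup X] [NormedSpace ℝ X] [CompleteSpace X]
    (μ : ℕ → ℝ) (hμpos : ∀ n, 0 < μ n) (hμmono : StrictMono μ)
    (ν : ℕ → ℝ) (hν : ∀ n, 1 ≤ ν n)
    (A : ℕ → X →L[ℝ] X) (𝒜 : ℕ → ℕ → X →L[ℝ] X)
    (h𝒜id : ∀ n, 𝒜 n n = 1)
    (h𝒜succ : ∀ m n, n ≤ m → 𝒜 (m + 1) n = (A m).comp (𝒜 m n))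
    (Z : Submodule ℝ X) (hZ : IsClosed (Z : Set X))
    (β : ℝ) (hβ : 0 < β)
    (hadm₁ : ∀ y : ℕ → X, y 0 = 0 → Summable (fun n => μ n ^ β * ν n * ‖y n‖) →
      ∃! x : ℕ → X, x 0 ∈ Z ∧ (∃ C, ∀ n, μ n ^ β * ‖x n‖ ≤ C) ∧
        ∀ n, x (n + 1) - A n (x n) = y (n + 1))
    (hadm₂ : ∀ y : ℕ → X, y 0 = 0 → Summable (fun n => μ n ^ (-β) * ν n * ‖y n‖) →
      ∃! x : ℕ → X, x 0 ∈ Z ∧ (∃ C, ∀ n, μ n ^ (-β) * ‖x n‖ ≤ C) ∧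
        ∀ n, x (n + 1) - A n (x n) = y (n + 1)) :
    ∃ (P : ℕ → X →L[ℝ] X) (B : ℕ → ℕ → X →L[ℝ] X) (D : ℝ), 0 < D
      ∧ (∀ n, (P n).comp (P n) = P n)
      ∧ (∀ n, (A n).comp (P n) = (P (n + 1)).comp (A n))
      -- `B m n` is the backward evolution `𝒜(m,n)(Id − P n)` on kernels:
      ∧ (∀ n, B n n = 1 - P n)
      ∧ (∀ m n, m < n → (A m).comp (B m n) = B (m + 1) n)
      ∧ (∀ m n, m ≤ n → (P m).comp (B m n) = 0)
      -- invertibility of `A_n : Ker P_n → Ker P_{n+1}`: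
      ∧ (∀ n v, P n v = 0 → B n (n + 1) (A n v) = v)
      -- the dichotomy estimates with exponent `λ = β`:
      ∧ (∀ m n, n ≤ m → ‖(𝒜 m n).comp (P n)‖ ≤ D * ν n * (μ m / μ n) ^ (-β))
      ∧ (∀ m n, m ≤ n → ‖B m n‖ ≤ D * ν n * (μ n / μ m) ^ (-β)) := by
  have hcomp n : μ n ^ (-β) ≤ μ 0 ^ (-(2 * β)) * μ n ^ β := by
    rw [show -β = -(2 * β) + β by ring, Real.rpow_add (hμpos n)]
    exact mul_le_mul_of_nonneg_right (Real.rpow_le_rpow_of_nonpos (hμpos 0)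
      (hμmono.monotone (Nat.zero_le n)) (by linarith)) (Real.rpow_pos_of_pos (hμpos n) β).le
  obtain ⟨P, B, D, hD, hproj, hcomm, hBself, hBstep, hBker, hBinv, hfwd, hbwd⟩ :=
    Admissible.exists_dichotomy (u := fun n => μ n ^ β) (u' := fun n => μ n ^ (-β)) h𝒜id h𝒜succ
      (fun n => Real.rpow_pos_of_pos (hμpos n) β) (fun n => Real.rpow_pos_of_pos (hμpos n) (-β))
      hν hZ hadm₁ hadm₂ (Real.rpow_pos_of_pos (hμpos 0) _).le hcomp
  refine ⟨P, B, D, hD, hproj, hcomm, hBself, hBstep, hBker, hBinv, fun m n hnm => ?_,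
    fun m n hmn => ?_⟩
  · rw [Real.rpow_neg (div_pos (hμpos m) (hμpos n)).le,
      Real.div_rpow (hμpos m).le (hμpos n).le, inv_div]
    exact hfwd m n hnm
  · rw [Real.div_rpow (hμpos n).le (hμpos m).le]
    exact hbwd m n hmn

/-- Theorem (admissibility implies dichotomy): if for some closed subspace
`Z ⊆ X` and some `β > 0` the pairs `(ℓ^1_{β,0}, ℓ^∞_{β,Z})` and
`(ℓ^1_{-β,0}, ℓ^∞_{-β,Z})` are properly admissible for `x_{n+1} = A_n x_n`,
then `(A_n)` admits a `(μ,ν)`-dichotomy with exponent `λ = β`: there are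
projections `P_n` commuting with the dynamics, `A_n|_{Ker P_n}` is invertible
onto `Ker P_{n+1}` (witnessed by the backward Green operators
`B m n = 𝒜(m,n)(Id − P n)`, `m ≤ n`), and the dichotomy estimates hold. -/
theorem stmt12 {X : Type*} [NormedAddCommGroup X] [NormedSpace ℝ X] [CompleteSpace X]
    (μ : ℕ → ℝ) (hμpos : ∀ n, 0 < μ n) (hμmono : StrictMono μ)
    (hμtop : Filter.Tendsto μ Filter.atTop Filter.atTop)
    (ν : ℕ → ℝ) (hν : ∀ n, 1 ≤ ν n)
    (A : ℕ → X →L[ℝ] X) (𝒜 : ℕ → ℕ → X →L[ℝ] X)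
    (h𝒜id : ∀ n, 𝒜 n n = 1)
    (h𝒜succ : ∀ m n, n ≤ m → 𝒜 (m + 1) n = (A m).comp (𝒜 m n))
    (Z : Submodule ℝ X) (hZ : IsClosed (Z : Set X))
    (β : ℝ) (hβ : 0 < β)
    (hadm₁ : ∀ y : ℕ → X, y 0 = 0 → Summable (fun n => μ n ^ β * ν n * ‖y n‖) →
      ∃! x : ℕ → X, x 0 ∈ Z ∧ (∃ C, ∀ n, μ n ^ β * ‖x n‖ ≤ C) ∧
        ∀ n, x (n + 1) - A n (x n) = y (n + 1))
    (hadm₂ : ∀ y : ℕ → X, y 0 = 0 → Summable (fun n => μ n ^ (-β) * ν n * ‖y n‖) →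
      ∃! x : ℕ → X, x 0 ∈ Z ∧ (∃ C, ∀ n, μ n ^ (-β) * ‖x n‖ ≤ C) ∧
        ∀ n, x (n + 1) - A n (x n) = y (n + 1)) :
    ∃ (P : ℕ → X →L[ℝ] X) (B : ℕ → ℕ → X →L[ℝ] X) (D : ℝ), 0 < D
      ∧ (∀ n, (P n).comp (P n) = P n)
      ∧ (∀ n, (A n).comp (P n) = (P (n + 1)).comp (A n))
      -- `B m n` is the backward evolution `𝒜(m,n)(Id − P n)` on kernels:
      ∧ (∀ n, B n n = 1 - P n)
      ∧ (∀ m n, m < n → (A m).comp (B m n) = B (m + 1) n)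
      ∧ (∀ m n, m ≤ n → (P m).comp (B m n) = 0)
      -- invertibility of `A_n : Ker P_n → Ker P_{n+1}`:
      ∧ (∀ n v, P n v = 0 → B n (n + 1) (A n v) = v)
      -- the dichotomy estimates with exponent `λ = β`:
      ∧ (∀ m n, n ≤ m → ‖(𝒜 m n).comp (P n)‖ ≤ D * ν n * (μ m / μ n) ^ (-β))
      ∧ (∀ m n, m ≤ n → ‖B m n‖ ≤ D * ν n * (μ n / μ m) ^ (-β)) :=
  stmt12_general μ hμpos hμmono ν hν A 𝒜 h𝒜id h𝒜succ Z hZ β hβ hadm₁ hadm₂
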